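/- arXiv:2311.11124 — 11 statements merged into one kernel-verified Lean document; each statement's English description precedes it below -/
import Mathlib

section
/- In a division ring, for a 2×2 matrix with entries x11, x12, x21, x22 (all invertible as needed), the (2,1) quasideterminant equals minus the (2,2) quasideterminant multiplied on the right by x12⁻¹·x11; that is, x21 − x22·x12⁻¹·x11 = −(x22 − x21·x11⁻¹·x12)·x12⁻¹·x11. -/
/-- Homological relation between the (2,1) and (2,2) quasideterminants of a
2×2 matrix over a division ring. -/
theorem quasidet_21_eq_neg_22 {R : Type*} [DivisionRing R]
    (x11 x12 x21 x22 : R) (h11 : x11 ≠ 0) (h12 : x12 ≠ 0) :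
    x21 - x22 * x12⁻¹ * x11 = -(x22 - x21 * x11⁻¹ * x12) * x12⁻¹ * x11 := by
  have : x21 * x11⁻¹ * x12 * x12⁻¹ * x11 = x21 := by
    rw [mul_assoc _ x12 x12⁻¹, mul_inv_cancel₀ h12, mul_one,
      mul_assoc, inv_mul_cancel₀ h11, mul_one]
  rw [neg_sub, sub_mul, sub_mul, this]
end

section
/- For a 3×3 matrix over a division ring, the noncommutative Jacobi identity for quasideterminants holds in the form: the (3,3) quasideterminant of the full matrix equals |D|_{22} − |B|_{21}·|A|_{11}⁻¹·|C|_{12}, where A, B, C, D are the 2×2 submatrices obtained by deleting (row 3, column 3), (row 1, column 3), (row 3, column 1), and (row 1, column 1) respectively. -/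
/-- Noncommutative Jacobi identity for quasideterminants of a 3×3 matrix over a
division ring: |X|₃₃ = |D|₂₂ − |B|₂₁ · |A|₁₁⁻¹ · |C|₁₂, where the 3×3
quasideterminant |X|₃₃ is written out via the quasideterminants of the 2×2
submatrix A (obtained by deleting row 3 and column 3), and A, B, C, D delete
(row 3, col 3), (row 1, col 3), (row 3, col 1), (row 1, col 1) respectively. -/
theorem quasidet_jacobi_3x3 {R : Type*} [DivisionRing R]
    (x11 x12 x13 x21 x22 x23 x31 x32 x33 : R)
    (h11 : x11 ≠ 0) (h12 : x12 ≠ 0) (h21 : x21 ≠ 0) (h22 : x22 ≠ 0)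
    (hA11 : x11 - x12 * x22⁻¹ * x21 ≠ 0)
    (hA12 : x12 - x11 * x21⁻¹ * x22 ≠ 0)
    (hA21 : x21 - x22 * x12⁻¹ * x11 ≠ 0)
    (hA22 : x22 - x21 * x11⁻¹ * x12 ≠ 0) :
    x33
      - x31 * (x11 - x12 * x22⁻¹ * x21)⁻¹ * x13
      - x31 * (x21 - x22 * x12⁻¹ * x11)⁻¹ * x23
      - x32 * (x12 - x11 * x21⁻¹ * x22)⁻¹ * x13
      - x32 * (x22 - x21 * x11⁻¹ * x12)⁻¹ * x23
    = (x33 - x32 * x22⁻¹ * x23)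
      - (x31 - x32 * x22⁻¹ * x21) * (x11 - x12 * x22⁻¹ * x21)⁻¹
          * (x13 - x12 * x22⁻¹ * x23) := by
  have hx22 : x22 * x22⁻¹ = 1 := mul_inv_cancel₀ h22
  have hx22' : x22⁻¹ * x22 = 1 := inv_mul_cancel₀ h22
  have hx11 : x11 * x11⁻¹ = 1 := mul_inv_cancel₀ h11
  have hx11' : x11⁻¹ * x11 = 1 := inv_mul_cancel₀ h11
  have hx12 : x12 * x12⁻¹ = 1 := mul_inv_cancel₀ h12
  have hx12' : x12⁻¹ * x12 = 1 := inv_mul_cancel₀ h12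
  have hx21 : x21 * x21⁻¹ = 1 := mul_inv_cancel₀ h21
  have hx21' : x21⁻¹ * x21 = 1 := inv_mul_cancel₀ h21
  have hAinv : (x11 - x12 * x22⁻¹ * x21) * (x11 - x12 * x22⁻¹ * x21)⁻¹ = 1 :=
    mul_inv_cancel₀ hA11
  have hAinv' : (x11 - x12 * x22⁻¹ * x21)⁻¹ * (x11 - x12 * x22⁻¹ * x21) = 1 :=
    inv_mul_cancel₀ hA11
  -- factorization of the (2,1) quasideterminant
  have f1 : x21 - x22 * x12⁻¹ * x11 = -(x22 * x12⁻¹ * (x11 - x12 * x22⁻¹ * x21)) := by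
    have : x22 * x12⁻¹ * (x12 * x22⁻¹ * x21) = x21 := by
      rw [show x22 * x12⁻¹ * (x12 * x22⁻¹ * x21) = x22 * (x12⁻¹ * x12) * (x22⁻¹ * x21) by
        noncomm_ring, hx12', mul_one, ← mul_assoc, hx22, one_mul]
    rw [mul_sub, this, neg_sub]
  have e1 : (x21 - x22 * x12⁻¹ * x11)⁻¹
      = -((x11 - x12 * x22⁻¹ * x21)⁻¹ * x12 * x22⁻¹) := by
    rw [f1, inv_neg, mul_inv_rev, mul_inv_rev, inv_inv]
    noncomm_ring
  -- factorization of the (1,2) quasideterminant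
  have f2 : x12 - x11 * x21⁻¹ * x22 = -((x11 - x12 * x22⁻¹ * x21) * x21⁻¹ * x22) := by
    have : x12 * x22⁻¹ * x21 * x21⁻¹ * x22 = x12 := by
      rw [mul_assoc (x12 * x22⁻¹), hx21, mul_one, mul_assoc, hx22', mul_one]
    rw [sub_mul, sub_mul, this, neg_sub]
  have e2 : (x12 - x11 * x21⁻¹ * x22)⁻¹
      = -(x22⁻¹ * x21 * (x11 - x12 * x22⁻¹ * x21)⁻¹) := by
    rw [f2, inv_neg, mul_inv_rev, mul_inv_rev, inv_inv]
    noncomm_ring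
  -- inverse of the (2,2) quasideterminant (Schur-complement identity)
  have e3 : (x22 - x21 * x11⁻¹ * x12)⁻¹
      = x22⁻¹ + x22⁻¹ * x21 * (x11 - x12 * x22⁻¹ * x21)⁻¹ * x12 * x22⁻¹ := by
    refine inv_eq_of_mul_eq_one_left ?_
    have key : x12 - x12 * x22⁻¹ * x21 * (x11⁻¹ * x12)
        = (x11 - x12 * x22⁻¹ * x21) * (x11⁻¹ * x12) := by
      rw [sub_mul]
      congr 1
      rw [← mul_assoc, hx11, one_mul]
    calc (x22⁻¹ + x22⁻¹ * x21 * (x11 - x12 * x22⁻¹ * x21)⁻¹ * x12 * x22⁻¹)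
          * (x22 - x21 * x11⁻¹ * x12)
        = x22⁻¹ * x22 - x22⁻¹ * x21 * (x11⁻¹ * x12)
          + x22⁻¹ * x21 * (x11 - x12 * x22⁻¹ * x21)⁻¹
            * (x12 * (x22⁻¹ * x22) - x12 * x22⁻¹ * x21 * (x11⁻¹ * x12)) := by
          noncomm_ring
      _ = 1 := by
          rw [hx22', mul_one, key,
            ← mul_assoc _ (x11 - x12 * x22⁻¹ * x21) (x11⁻¹ * x12),
            mul_assoc (x22⁻¹ * x21), hAinv', mul_one]
          noncomm_ring
  rw [e1, e2, e3]
  noncomm_ring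
end

section
/- Let θ : ℤ³ → R take values in units of a division ring R, and define a = θ(l+1,m,n)·θ(l,m,n)⁻¹ and b = θ(l,m−1,n+1)·θ(l,m,n)⁻¹. Then the consistency system b(l,m,n+1) + a(l,m−1,n+1) = a(l,m,n+1) + b(l+1,m,n) and a(l,m−1,n+1)·b(l,m,n) = b(l+1,m,n)·a(l,m,n) holds for all (l,m,n) if and only if θ satisfies the noncommutative 2d discrete Toda equation θ(l+1,m+1,n) = θ(l,m,n+1) + θ(l+1,m,n)·(θ(l,m,n)⁻¹ − θ(l+1,m+1,n−1)⁻¹)·θ(l,m+1,n). -/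
/-- `a` variable of the scalar Lax pair for the noncommutative 2d discrete Toda
lattice. -/
def todaA {R : Type*} [DivisionRing R] (θ : ℤ → ℤ → ℤ → R) (l m n : ℤ) : R :=
  θ (l + 1) m n * (θ l m n)⁻¹

/-- `b` variable of the scalar Lax pair for the noncommutative 2d discrete Toda
lattice. -/
def todaB {R : Type*} [DivisionRing R] (θ : ℤ → ℤ → ℤ → R) (l m n : ℤ) : R :=
  θ l (m - 1) (n + 1) * (θ l m n)⁻¹

/-- The compatibility system for `a`, `b` holds for all indices iff `θ`
satisfies the noncommutative 2d discrete Toda equation. -/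
theorem toda2d_scalar_compatibility_iff {R : Type*} [DivisionRing R]
    (θ : ℤ → ℤ → ℤ → R) (hθ : ∀ l m n, θ l m n ≠ 0) :
    (∀ l m n : ℤ,
        todaB θ l m (n + 1) + todaA θ l (m - 1) (n + 1)
            = todaA θ l m (n + 1) + todaB θ (l + 1) m n ∧
        todaA θ l (m - 1) (n + 1) * todaB θ l m n
            = todaB θ (l + 1) m n * todaA θ l m n)
    ↔ (∀ l m n : ℤ,
        θ (l + 1) (m + 1) n
          = θ l m (n + 1)
            + θ (l + 1) m n * ((θ l m n)⁻¹ - (θ (l + 1) (m + 1) (n - 1))⁻¹)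
              * θ l (m + 1) n) := by
  constructor
  · intro h l m n
    have h1 := (h l (m + 1) (n - 1)).1
    simp only [todaA, todaB, add_sub_cancel_right, sub_add_cancel] at h1
    have h2 := congrArg (· * θ l (m + 1) n) h1
    simp only [add_mul, mul_assoc, inv_mul_cancel₀ (hθ l (m + 1) n), mul_one] at h2
    have h3 := eq_sub_of_add_eq h2.symm
    rw [mul_sub, sub_mul, mul_assoc, mul_assoc, h3, add_sub_assoc]
  · intro h l m n
    refine ⟨?_, ?_⟩
    · have h1 := h l (m - 1) (n + 1)
      simp only [sub_add_cancel, add_sub_cancel_right] at h1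
      have h2 := congrArg (· * (θ l m (n + 1))⁻¹) h1
      simp only [add_mul, mul_sub, sub_mul, mul_assoc,
        mul_inv_cancel₀ (hθ l m (n + 1)), mul_one] at h2
      simp only [todaA, todaB, mul_assoc]
      rw [h2]
      abel
    · simp only [todaA, todaB, mul_assoc, inv_mul_cancel_left₀ (hθ l (m - 1) (n + 1)),
        inv_mul_cancel_left₀ (hθ (l + 1) m n)]
end

section
/- Conversely, if the 2×2 matrices L and M defined from θ : ℤ³ → Rˣ as in the noncommutative 2d discrete Toda Lax pair satisfy L(l,m−1,n)·M(l,m,n) = M(l,m,n+1)·L(l,m,n) for all (l,m,n), then θ satisfies the noncommutative 2d discrete Toda equation θ(l+1,m+1,n) = θ(l,m,n+1) + θ(l+1,m,n)·(θ(l,m,n)⁻¹ − θ(l+1,m+1,n−1)⁻¹)·θ(l,m+1,n). -/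
open Polynomial

set_option maxRecDepth 20000

/-- The `L` matrix of the 2×2 Lax pair for the noncommutative 2d discrete Toda
lattice, with the shift symbol realized as the central indeterminate `X`. -/
noncomputable def todaL2d {R : Type*} [DivisionRing R] (θ : ℤ → ℤ → ℤ → R) (l m n : ℤ) :
    Matrix (Fin 2) (Fin 2) (Polynomial R) :=
  !![X - C (θ (l + 1) m n * (θ (l + 1) (m + 1) (n - 1))⁻¹)
        - C (θ (l + 1) (m + 1) n * (θ l (m + 1) n)⁻¹),
      -C (θ (l + 1) m n);
     C ((θ l (m + 1) n)⁻¹), 0]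

/-- The `M` matrix of the 2×2 Lax pair for the noncommutative 2d discrete Toda
lattice. -/
noncomputable def todaM2d {R : Type*} [DivisionRing R] (θ : ℤ → ℤ → ℤ → R) (l m n : ℤ) :
    Matrix (Fin 2) (Fin 2) (Polynomial R) :=
  !![1, C (θ l m n);
     -C ((θ (l + 1) m (n - 1))⁻¹),
      X - C ((θ (l + 1) m (n - 1))⁻¹ * θ l m n)]

/-- If the discrete zero-curvature condition holds for the Toda Lax matrices,
then `θ` satisfies the noncommutative 2d discrete Toda equation. -/
theorem toda2d_of_zero_curvature {R : Type*} [DivisionRing R]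
    (θ : ℤ → ℤ → ℤ → R) (hθ : ∀ l m n, θ l m n ≠ 0)
    (hzc : ∀ l m n : ℤ,
      todaL2d θ l (m - 1) n * todaM2d θ l m n
        = todaM2d θ l m (n + 1) * todaL2d θ l m n) :
    ∀ l m n : ℤ,
      θ (l + 1) (m + 1) n
        = θ l m (n + 1)
          + θ (l + 1) m n * ((θ l m n)⁻¹ - (θ (l + 1) (m + 1) (n - 1))⁻¹)
            * θ l (m + 1) n := by
  intro l m n
  have h := congrArg (fun A : Matrix (Fin 2) (Fin 2) (Polynomial R) => (A 0 0).coeff 0) (hzc l m n)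
  simp only [todaL2d, todaM2d, Matrix.mul_apply, Matrix.of_apply, Fin.sum_univ_two, add_sub_cancel_right, sub_add_cancel, Matrix.vecHead,
    Matrix.cons_val', Matrix.cons_val_zero, Matrix.cons_val_one, Matrix.head_cons,
    Matrix.empty_val', Matrix.cons_val_fin_one,
    add_zero, mul_one, mul_zero, zero_mul, one_mul,
    coeff_add, coeff_sub, mul_neg, neg_mul, neg_neg, coeff_neg, coeff_one_zero,
    ← C_mul, coeff_C_zero, coeff_X_zero, zero_sub, sub_mul] at h
  have ht := hθ l (m + 1) n
  have h2 := congrArg (fun x : R => x * θ l (m + 1) n) h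
  simp only [add_mul, sub_mul, neg_mul, mul_assoc, inv_mul_cancel₀ ht, mul_one] at h2
  set L' := θ (l + 1) (m + 1) n with hL
  set e := θ l m (n + 1) with he
  set Xv := θ (l + 1) m n * ((θ l m n)⁻¹ * θ l (m + 1) n) with hX
  set Yv := θ (l + 1) m n * ((θ (l + 1) (m + 1) (n - 1))⁻¹ * θ l (m + 1) n) with hY
  have h3 : -Xv = -Yv - L' + e := by rw [← h2]; abel
  have h5 : Xv = Yv + L' - e := by rw [← neg_inj, h3]; abel
  calc L' = e + ((Yv + L' - e) - Yv) := by abel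
    _ = e + (Xv - Yv) := by rw [← h5]
    _ = e + θ (l + 1) m n * ((θ l m n)⁻¹ - (θ (l + 1) (m + 1) (n - 1))⁻¹) * θ l (m + 1) n := by
        rw [hX, hY]; noncomm_ring
end

section
/- Let θ : ℤ² → Rˣ and λ a central invertible element. Define 2×2 matrices L(m,n) = [[λ − θ(m+1,n)θ(m+2,n−1)⁻¹ − θ(m+2,n)θ(m+1,n)⁻¹, −θ(m+1,n)], [θ(m+1,n)⁻¹, 0]] and M(m,n) = [[1, θ(m,n)], [−θ(m+1,n−1)⁻¹, λ − θ(m+1,n−1)⁻¹θ(m,n)]]. Then L(m−1,n)·M(m,n) = M(m,n+1)·L(m,n) holds for all (m,n) if and only if θ satisfies the noncommutative 1d discrete Toda equation θ(m+2,n) = θ(m,n+1) + θ(m+1,n)·(θ(m,n)⁻¹ − θ(m+2,n−1)⁻¹)·θ(m+1,n). -/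
open Polynomial

/-- The `L` matrix of the 2×2 Lax pair for the noncommutative 1d discrete Toda
lattice, with the spectral parameter the central indeterminate `X`. -/
noncomputable def toda1dL {R : Type*} [DivisionRing R] (θ : ℤ → ℤ → R) (m n : ℤ) :
    Matrix (Fin 2) (Fin 2) (Polynomial R) :=
  !![X - C (θ (m + 1) n * (θ (m + 2) (n - 1))⁻¹)
        - C (θ (m + 2) n * (θ (m + 1) n)⁻¹),
      -C (θ (m + 1) n);
     C ((θ (m + 1) n)⁻¹), 0]

/-- The `M` matrix of the 2×2 Lax pair for the noncommutative 1d discrete Toda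
lattice. -/
noncomputable def toda1dM {R : Type*} [DivisionRing R] (θ : ℤ → ℤ → R) (m n : ℤ) :
    Matrix (Fin 2) (Fin 2) (Polynomial R) :=
  !![1, C (θ m n);
     -C ((θ (m + 1) (n - 1))⁻¹),
      X - C ((θ (m + 1) (n - 1))⁻¹ * θ m n)]

lemma toda1d_scalar_iff {R : Type*} [DivisionRing R] {a b c d e : R}
    (hb : b ≠ 0) :
    d = e + b * (a⁻¹ - c⁻¹) * b ↔ b * a⁻¹ = b * c⁻¹ + d * b⁻¹ - e * b⁻¹ := by
  constructor
  · intro h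
    rw [h, add_mul, mul_assoc _ b b⁻¹, mul_inv_cancel₀ hb, mul_one, mul_sub]
    abel
  · intro h
    have h' : d * b⁻¹ = e * b⁻¹ + (b * a⁻¹ - b * c⁻¹) := by rw [h]; abel
    have h2 : d * b⁻¹ * b = (e * b⁻¹ + (b * a⁻¹ - b * c⁻¹)) * b := by rw [h']
    rw [mul_assoc, inv_mul_cancel₀ hb, mul_one, add_mul, mul_assoc,
      inv_mul_cancel₀ hb, mul_one] at h2
    rw [h2, mul_sub, sub_mul]

/-- The zero-curvature condition `L(m−1,n)·M(m,n) = M(m,n+1)·L(m,n)` holds for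
all `(m,n)` iff `θ` satisfies the noncommutative 1d discrete Toda equation. -/
theorem toda1d_zero_curvature_iff {R : Type*} [DivisionRing R]
    (θ : ℤ → ℤ → R) (hθ : ∀ m n, θ m n ≠ 0) :
    (∀ m n : ℤ,
        toda1dL θ (m - 1) n * toda1dM θ m n
          = toda1dM θ m (n + 1) * toda1dL θ m n)
    ↔ (∀ m n : ℤ,
        θ (m + 2) n
          = θ m (n + 1)
            + θ (m + 1) n * ((θ m n)⁻¹ - (θ (m + 2) (n - 1))⁻¹)
              * θ (m + 1) n) := by
  refine forall_congr' fun m => forall_congr' fun n => ?_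
  rw [toda1dL, toda1dM, toda1dL, toda1dM, Matrix.mul_fin_two, Matrix.mul_fin_two,
    ← Matrix.ext_iff]
  have h1 : m - 1 + 1 = m := by ring
  have h2 : m - 1 + 2 = m + 1 := by ring
  have h3 : n + 1 - 1 = n := by ring
  rw [h1, h2, h3]
  set a := θ m n with ha'
  set b := θ (m + 1) n with hb'
  set c := θ (m + 2) (n - 1) with hc'
  set d := θ (m + 2) n with hd'
  set e := θ m (n + 1) with he'
  set f := θ (m + 1) (n - 1) with hf'
  have ha : a ≠ 0 := hθ m n
  have hb : b ≠ 0 := hθ (m + 1) n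
  rw [toda1d_scalar_iff hb]
  simp only [Matrix.cons_val', Matrix.cons_val_zero, Matrix.cons_val_one, Matrix.head_cons,
    Matrix.head_fin_const, Matrix.empty_val', Matrix.cons_val_fin_one, Fin.forall_fin_two,
    Matrix.of_apply, mul_one, one_mul, neg_mul_neg, mul_zero, zero_mul, add_zero, zero_add,
    ← C_mul, neg_neg]
  constructor
  · rintro ⟨⟨h00, -⟩, -⟩
    have h0 := congrArg (fun p => Polynomial.coeff p 0) h00
    simp only [coeff_add, coeff_sub, coeff_X_zero, coeff_C_zero, zero_sub] at h0
    rw [← sub_eq_zero]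
    rw [← sub_eq_zero, ← neg_eq_zero] at h0
    rw [← h0]
    abel
  · intro h
    have hs2 : a⁻¹ = c⁻¹ + b⁻¹ * (d * b⁻¹) - b⁻¹ * (e * b⁻¹) := by
      have := congrArg (fun x => b⁻¹ * x) h
      simpa only [mul_add, mul_sub, ← mul_assoc, inv_mul_cancel₀ hb, one_mul] using this
    refine ⟨⟨?_, ?_⟩, ?_, ?_⟩
    · rw [h]
      simp only [map_add, map_sub]
      abel
    · simp only [sub_mul, mul_sub, mul_neg, neg_mul, neg_neg, X_mul_C, ← C_mul, ← mul_assoc,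
        inv_mul_cancel_right₀ ha]
      abel
    · rw [hs2]
      simp only [map_add, map_sub, neg_mul, mul_sub, sub_mul, X_mul, ← C_mul,
        ← mul_assoc, inv_mul_cancel₀ hb, one_mul]
      abel
    · rw [inv_mul_cancel₀ ha, inv_mul_cancel₀ hb]
end

section
/- Let u, v : ℤ → R be families in an associative ring with derivation ∂ satisfying the split Volterra system u(n)' = v(n+1)·u(n) − u(n)·v(n) and v(n)' = u(n)·v(n) − v(n)·u(n−1). Then the Miura variables a(n) = u(n) + v(n) and b(n) = v(n)·u(n−1) satisfy the noncommutative 1d Toda system a(n)' = b(n+1) − b(n) and b(n)' = a(n)·b(n) − b(n)·a(n−1). -/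
/-- Discrete Miura transformation: if `u`, `v` satisfy the split Volterra
system, then `a(n) = u(n) + v(n)` and `b(n) = v(n)·u(n−1)` satisfy the
noncommutative 1d Toda system. -/
theorem miura_volterra_to_toda {R : Type*} [Ring R]
    (d : R → R)
    (hd_add : ∀ x y : R, d (x + y) = d x + d y)
    (hd_mul : ∀ x y : R, d (x * y) = d x * y + x * d y)
    (u v : ℤ → R)
    (hu : ∀ n : ℤ, d (u n) = v (n + 1) * u n - u n * v n)
    (hv : ∀ n : ℤ, d (v n) = u n * v n - v n * u (n - 1)) :
    (∀ n : ℤ, d (u n + v n) = v (n + 1) * u n - v n * u (n - 1)) ∧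
    (∀ n : ℤ, d (v n * u (n - 1))
        = (u n + v n) * (v n * u (n - 1))
          - (v n * u (n - 1)) * (u (n - 1) + v (n - 1))) := by
  constructor
  · intro n
    rw [hd_add, hu, hv]
    noncomm_ring
  · intro n
    rw [hd_mul, hu, hv]
    have : n - 1 + 1 = n := by ring
    rw [this]
    noncomm_ring
end

section
/- Let θ : ℤ → Rˣ in a division ring R with derivation ∂, and set a(n) = θ(n)'·θ(n)⁻¹, b(n) = θ(n)·θ(n−1)⁻¹. Then the pair of equations a(n)' = b(n+1) − b(n) and b(n)' = a(n)·b(n) − b(n)·a(n−1) holds for all n if and only if θ satisfies the noncommutative 1d Toda field equation (θ(n)'·θ(n)⁻¹)' = θ(n+1)·θ(n)⁻¹ − θ(n)·θ(n−1)⁻¹; moreover the equation for b is automatic (an identity) for any invertible θ. -/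
/-- With `a(n) = θ(n)'·θ(n)⁻¹` and `b(n) = θ(n)·θ(n−1)⁻¹`, the noncommutative
1d Toda system for `(a, b)` holds for all `n` iff `θ` satisfies the
noncommutative 1d Toda field equation; moreover the equation for `b` is an
identity for any family of nonzero elements. -/
theorem toda1d_continuous_iff {R : Type*} [DivisionRing R]
    (d : R → R)
    (hd_add : ∀ x y : R, d (x + y) = d x + d y)
    (hd_mul : ∀ x y : R, d (x * y) = d x * y + x * d y)
    (θ : ℤ → R) (hθ : ∀ n : ℤ, θ n ≠ 0) :
    ((∀ n : ℤ,
        d (d (θ n) * (θ n)⁻¹)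
            = θ (n + 1) * (θ n)⁻¹ - θ n * (θ (n - 1))⁻¹ ∧
        d (θ n * (θ (n - 1))⁻¹)
            = (d (θ n) * (θ n)⁻¹) * (θ n * (θ (n - 1))⁻¹)
              - (θ n * (θ (n - 1))⁻¹) * (d (θ (n - 1)) * (θ (n - 1))⁻¹))
      ↔ (∀ n : ℤ,
          d (d (θ n) * (θ n)⁻¹)
            = θ (n + 1) * (θ n)⁻¹ - θ n * (θ (n - 1))⁻¹)) ∧
    (∀ n : ℤ,
        d (θ n * (θ (n - 1))⁻¹)
          = (d (θ n) * (θ n)⁻¹) * (θ n * (θ (n - 1))⁻¹)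
            - (θ n * (θ (n - 1))⁻¹) * (d (θ (n - 1)) * (θ (n - 1))⁻¹)) := by
  have hd1 : d 1 = 0 := by
    have := hd_mul 1 1
    simp at this
    exact this
  have hinv : ∀ x : R, x ≠ 0 → d x⁻¹ = -(x⁻¹ * d x * x⁻¹) := by
    intro x hx
    have h : d (x * x⁻¹) = 0 := by rw [mul_inv_cancel₀ hx, hd1]
    rw [hd_mul] at h
    have h2 : x⁻¹ * (d x * x⁻¹ + x * d x⁻¹) = 0 := by rw [h, mul_zero]
    rw [mul_add, ← mul_assoc, ← mul_assoc, inv_mul_cancel₀ hx, one_mul] at h2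
    linear_combination (norm := noncomm_ring) h2
  have key : ∀ n : ℤ,
      d (θ n * (θ (n - 1))⁻¹)
        = (d (θ n) * (θ n)⁻¹) * (θ n * (θ (n - 1))⁻¹)
          - (θ n * (θ (n - 1))⁻¹) * (d (θ (n - 1)) * (θ (n - 1))⁻¹) := by
    intro n
    rw [hd_mul, hinv _ (hθ (n - 1))]
    have h1 : (d (θ n) * (θ n)⁻¹) * (θ n * (θ (n - 1))⁻¹)
        = d (θ n) * (θ (n - 1))⁻¹ := by
      rw [mul_assoc, ← mul_assoc (θ n)⁻¹, inv_mul_cancel₀ (hθ n), one_mul]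
    rw [h1]
    noncomm_ring
  exact ⟨⟨fun h n => (h n).1, fun h n => ⟨h n, key n⟩⟩, key⟩
end

section
/- Let v : ℤ² → Rˣ in a division ring and λ a central element. Define 2×2 matrices L(m,n) = [[−v(m,n)⁻¹, λ],[1, −v(m,n)]] and M(m,n) = [[v(m+1,n) − v(m,n)⁻¹, λ],[1, 0]]. Then L(m+1,n)·M(m,n) = M(m,n+1)·L(m,n) for all (m,n) if and only if v satisfies the noncommutative discrete KdV equation v(m+1,n+1) − v(m,n) = v(m,n+1)⁻¹ − v(m+1,n)⁻¹. -/
open Polynomial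

/-- The `L` matrix of the Lax pair for the noncommutative discrete KdV
equation, with spectral parameter the central indeterminate `X`. -/
noncomputable def dKdVL {R : Type*} [DivisionRing R] (v : ℤ → ℤ → R) (m n : ℤ) :
    Matrix (Fin 2) (Fin 2) (Polynomial R) :=
  !![-C ((v m n)⁻¹), X;
     1, -C (v m n)]

/-- The `M` matrix of the Lax pair for the noncommutative discrete KdV
equation. -/
noncomputable def dKdVM {R : Type*} [DivisionRing R] (v : ℤ → ℤ → R) (m n : ℤ) :
    Matrix (Fin 2) (Fin 2) (Polynomial R) :=
  !![C (v (m + 1) n) - C ((v m n)⁻¹), X;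
     1, 0]

/-- The zero-curvature condition `L(m+1,n)·M(m,n) = M(m,n+1)·L(m,n)` holds for
all `(m,n)` iff `v` satisfies the noncommutative discrete KdV equation. -/
theorem dKdV_zero_curvature_iff {R : Type*} [DivisionRing R]
    (v : ℤ → ℤ → R) (hv : ∀ m n, v m n ≠ 0) :
    (∀ m n : ℤ,
        dKdVL v (m + 1) n * dKdVM v m n = dKdVM v m (n + 1) * dKdVL v m n)
    ↔ (∀ m n : ℤ,
        v (m + 1) (n + 1) - v m n = (v m (n + 1))⁻¹ - (v (m + 1) n)⁻¹) := by
  constructor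
  · intro h m n
    have H := congrFun (congrFun (h m n) 0) 1
    simp [dKdVL, dKdVM, Matrix.mul_apply, Fin.sum_univ_two] at H
    have H1 := congrArg (fun p => Polynomial.coeff p 1) H
    simp at H1
    rw [sub_eq_add_neg ((v m (n + 1))⁻¹), H1]
    abel
  · intro h m n
    -- the key rearrangement of the KdV equation
    have e1 : v (m + 1) (n + 1) - (v m (n + 1))⁻¹ = v m n - (v (m + 1) n)⁻¹ :=
      sub_eq_sub_iff_sub_eq_sub.mp (h m n)
    refine Matrix.ext fun i j => ?_
    fin_cases i <;> fin_cases j <;>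
      simp [dKdVL, dKdVM, Matrix.mul_apply, Fin.sum_univ_two]
    · rw [← map_sub, ← map_sub, ← map_mul, ← map_mul]
      refine congrArg C ?_
      rw [e1, sub_mul, mul_sub, inv_mul_cancel₀ (hv _ _), mul_inv_cancel₀ (hv _ _)]
    · rw [← sub_eq_add_neg, ← sub_mul, ← neg_mul, ← map_neg, ← map_sub, ← map_sub]
      refine congrArg (· * X) (congrArg C ?_)
      have : v (m + 1) (n + 1) - (v m (n + 1))⁻¹ - v m n = -(v (m + 1) n)⁻¹ := by
        rw [e1]; abel
      exact this.symm
    · abel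
end

section
/- Let u : ℤ² → R and v : ℤ² → Rˣ in a division ring, and let p, q be nonzero central constants. Suppose p·v(m,n+1) = u(m,n+1) − u(m+1,n) and q·v(m,n)⁻¹ = u(m,n−1) − u(m+1,n) for all (m,n). Then u satisfies the noncommutative potential discrete KdV equation (u(m,n+1) − u(m+1,n))·(u(m,n) − u(m+1,n+1)) = p·q, and v satisfies p·(v(m,n) − v(m+1,n+1)) = q·(v(m,n+1)⁻¹ − v(m+1,n)⁻¹). -/
/-- From the linearizing system relating `u` and `v`, one deduces the
noncommutative potential discrete KdV equation for `u` and the noncommutative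
discrete KdV equation for `v`. -/
theorem dKdV_potential {R : Type*} [DivisionRing R]
    (p q : R) (hp : p ≠ 0) (hq : q ≠ 0)
    (hpc : ∀ x : R, Commute p x) (hqc : ∀ x : R, Commute q x)
    (u : ℤ → ℤ → R) (v : ℤ → ℤ → R) (hv : ∀ m n, v m n ≠ 0)
    (h1 : ∀ m n : ℤ, p * v m (n + 1) = u m (n + 1) - u (m + 1) n)
    (h2 : ∀ m n : ℤ, q * (v m n)⁻¹ = u m (n - 1) - u (m + 1) n) :
    (∀ m n : ℤ,
        (u m (n + 1) - u (m + 1) n) * (u m n - u (m + 1) (n + 1)) = p * q) ∧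
    (∀ m n : ℤ,
        p * (v m n - v (m + 1) (n + 1))
          = q * ((v m (n + 1))⁻¹ - (v (m + 1) n)⁻¹)) := by
  constructor
  · intro m n
    have h2' := h2 m (n + 1)
    rw [show n + 1 - 1 = n by ring] at h2'
    rw [← h1 m n, ← h2', mul_assoc p, ← mul_assoc (v m (n + 1)),
      ← (hqc (v m (n + 1))).eq, mul_assoc q, mul_inv_cancel₀ (hv m (n + 1)),
      mul_one]
  · intro m n
    have e1 : p * v m n = u m n - u (m + 1) (n - 1) := by
      have := h1 m (n - 1); rwa [show n - 1 + 1 = n by ring] at this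
    have e2 := h1 (m + 1) n
    have e3 : q * (v m (n + 1))⁻¹ = u m n - u (m + 1) (n + 1) := by
      have := h2 m (n + 1); rwa [show n + 1 - 1 = n by ring] at this
    have e4 := h2 (m + 1) n
    rw [mul_sub, mul_sub, e1, e2, e3, e4]
    abel
end

section
/- Let y : ℤ → Rˣ solve the noncommutative nonautonomous Somos-4 relation y(M+4) = α_M·y(M+1) + y(M+2)·(y(M)⁻¹ − y(M+3)⁻¹·α_{M−1})·y(M+2), where α_M = α·q^M with α ∈ R and q a central unit. Then u(M) := y(M+3)·y(M+2)⁻¹ satisfies the noncommutative q-Painlevé I equation u(M+1)·u(M) − u(M−1)·u(M−2) = α_M·u(M−1)⁻¹ − u(M)⁻¹·α_{M−1}. -/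
/-- The noncommutative nonautonomous Somos-4 relation implies the
noncommutative q-Painlevé I equation for `u(M) = y(M+3)·y(M+2)⁻¹`. -/
theorem somos4_to_qPI {R : Type*} [DivisionRing R]
    (q : R) (hq : q ≠ 0) (hqc : ∀ x : R, Commute q x)
    (α : R) (y : ℤ → R) (hy : ∀ M : ℤ, y M ≠ 0)
    (hsomos : ∀ M : ℤ,
      y (M + 4)
        = (α * q ^ M) * y (M + 1)
          + y (M + 2) * ((y M)⁻¹ - (y (M + 3))⁻¹ * (α * q ^ (M - 1)))
            * y (M + 2))
    (u : ℤ → R) (hu : ∀ M : ℤ, u M = y (M + 3) * (y (M + 2))⁻¹) :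
    ∀ M : ℤ,
      u (M + 1) * u M - u (M - 1) * u (M - 2)
        = (α * q ^ M) * (u (M - 1))⁻¹ - (u M)⁻¹ * (α * q ^ (M - 1)) := by
  intro M
  have e1 : M - 1 + 3 = M + 2 := by ring
  have e2 : M - 1 + 2 = M + 1 := by ring
  have e3 : M - 2 + 3 = M + 1 := by ring
  have e4 : M - 2 + 2 = M := by ring
  have e5 : M + 1 + 3 = M + 4 := by ring
  have e6 : M + 1 + 2 = M + 3 := by ring
  rw [hu (M + 1), hu M, hu (M - 1), hu (M - 2), e1, e2, e3, e4, e5, e6,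
    mul_inv_rev, mul_inv_rev, inv_inv, inv_inv]
  have c1 : y (M + 4) * (y (M + 3))⁻¹ * (y (M + 3) * (y (M + 2))⁻¹)
      = y (M + 4) * (y (M + 2))⁻¹ := by
    rw [mul_assoc, ← mul_assoc (y (M + 3))⁻¹, inv_mul_cancel₀ (hy (M + 3)), one_mul]
  have c2 : y (M + 2) * (y (M + 1))⁻¹ * (y (M + 1) * (y M)⁻¹)
      = y (M + 2) * (y M)⁻¹ := by
    rw [mul_assoc, ← mul_assoc (y (M + 1))⁻¹, inv_mul_cancel₀ (hy (M + 1)), one_mul]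
  rw [c1, c2, hsomos M, add_mul]
  rw [mul_assoc (y (M + 2) * ((y M)⁻¹ - (y (M + 3))⁻¹ * (α * q ^ (M - 1)))),
    mul_inv_cancel₀ (hy (M + 2)), mul_one]
  noncomm_ring
end

section
/- Let y : ℤ → Rˣ solve the noncommutative nonautonomous Somos-5 relation y(M+5) = α_M·y(M+1) + y(M+2)·(y(M)⁻¹ − y(M+4)⁻¹·α_{M−1})·y(M+3), with α_M = α·q^M, α ∈ R, q central invertible. Then u(M) := y(M+4)·y(M+2)⁻¹ satisfies the noncommutative q-Painlevé II equation u(M+1)·u(M−1) − u(M−2)·u(M−1) = α_M − u(M)⁻¹·α_{M−1}·u(M−1). -/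
/-- The noncommutative nonautonomous Somos-5 relation implies the
noncommutative q-Painlevé II equation for `u(M) = y(M+4)·y(M+2)⁻¹`. -/
theorem somos5_to_qPII {R : Type*} [DivisionRing R]
    (q : R) (hq : q ≠ 0) (hqc : ∀ x : R, Commute q x)
    (α : R) (y : ℤ → R) (hy : ∀ M : ℤ, y M ≠ 0)
    (hsomos : ∀ M : ℤ,
      y (M + 5)
        = (α * q ^ M) * y (M + 1)
          + y (M + 2) * ((y M)⁻¹ - (y (M + 4))⁻¹ * (α * q ^ (M - 1)))
            * y (M + 3))
    (u : ℤ → R) (hu : ∀ M : ℤ, u M = y (M + 4) * (y (M + 2))⁻¹) :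
    ∀ M : ℤ,
      u (M + 1) * u (M - 1) - u (M - 2) * u (M - 1)
        = (α * q ^ M) - (u M)⁻¹ * (α * q ^ (M - 1)) * u (M - 1) := by
  intro M
  have e1 : u (M + 1) = y (M + 5) * (y (M + 3))⁻¹ := by
    have := hu (M + 1)
    rwa [show M + 1 + 4 = M + 5 by ring, show M + 1 + 2 = M + 3 by ring] at this
  have e2 : u (M - 1) = y (M + 3) * (y (M + 1))⁻¹ := by
    have := hu (M - 1)
    rwa [show M - 1 + 4 = M + 3 by ring, show M - 1 + 2 = M + 1 by ring] at this
  have e3 : u (M - 2) = y (M + 2) * (y M)⁻¹ := by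
    have := hu (M - 2)
    rwa [show M - 2 + 4 = M + 2 by ring, show M - 2 + 2 = M by ring] at this
  rw [e1, e2, e3, hu M, hsomos M, mul_inv_rev, inv_inv]
  simp only [mul_sub, sub_mul, add_mul, mul_assoc]
  rw [inv_mul_cancel_left₀ (hy (M + 3)), mul_inv_cancel₀ (hy (M + 1)), mul_one]
  abel
end
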